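/- arXiv:1812.07261 — 4 statements merged into one kernel-verified Lean document; each statement's English description precedes it below -/
import Mathlib

section
/- Let Δ ⊆ ℝ_{≥0}^n be a compact convex set such that for every t ≥ 0 the slice Δ_{x_1 = t} := {(x_2,...,x_n) : (t,x_2,...,x_n) ∈ Δ} is contained (after projection to ℝ^{n-1}) in the standard simplex ▲_t^{n-1} of size t. If for some ξ > 0 the volume of the portion Δ_{x_1 ≤ ξ} equals ξ^n/n! (the volume of the inverted standard simplex of size ξ), then Δ_{x_1 ≤ ξ} equals the inverted standard simplex of size ξ. -/
open MeasureTheory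

noncomputable def Tset (m : ℕ) (t : ℝ) : Set (Fin m → ℝ) :=
  {x | (∀ i, 0 ≤ x i) ∧ ∑ i, x i ≤ t}

lemma e_apply (m : ℕ) (x : Fin (m+1) → ℝ) :
    (MeasurableEquiv.piFinSuccAbove (fun _ : Fin (m+1) => ℝ) 0) x
      = (x 0, fun j => x j.succ) := by
  rw [MeasurableEquiv.piFinSuccAbove_apply]
  refine Prod.ext ?_ ?_
  · simp [Fin.insertNthEquiv]
  · funext j
    simp [Fin.insertNthEquiv, Fin.removeNth, Fin.tail]

lemma Tset_measurable (m : ℕ) (t : ℝ) : MeasurableSet (Tset m t) := by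
  have : Tset m t = (⋂ i, {x : Fin m → ℝ | 0 ≤ x i}) ∩ {x | ∑ i, x i ≤ t} := by
    ext x; simp [Tset]
  rw [this]
  exact (MeasurableSet.iInter fun i =>
      measurableSet_le measurable_const (measurable_pi_apply i)).inter
    (measurableSet_le (Finset.measurable_sum _ fun i _ => measurable_pi_apply i) measurable_const)

lemma vol_Tset : ∀ (m : ℕ) (t : ℝ), 0 ≤ t →
    volume (Tset m t) = ENNReal.ofReal (t ^ m / m.factorial) := by
  intro m
  induction m with
  | zero =>
    intro t ht
    have h : Tset 0 t = Set.univ := by ext x; simp [Tset, ht]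
    rw [h, show (volume : Measure (Fin 0 → ℝ)) = Measure.pi (fun _ => volume) from rfl,
      Measure.pi_of_empty]
    simp
  | succ m ih =>
    intro t ht
    set P : Set (ℝ × (Fin m → ℝ)) :=
      {p | (0 ≤ p.1 ∧ p.1 ≤ t) ∧ ((∀ i, 0 ≤ p.2 i) ∧ ∑ i, p.2 i ≤ t - p.1)} with hP
    have hPm : MeasurableSet P := by
      have : P = ({p : ℝ × (Fin m → ℝ) | 0 ≤ p.1} ∩ {p | p.1 ≤ t}) ∩
          ((⋂ i, {p : ℝ × (Fin m → ℝ) | 0 ≤ p.2 i}) ∩ {p | ∑ i, p.2 i ≤ t - p.1}) := by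
        ext p; simp [hP, and_assoc]
      rw [this]
      exact (((measurableSet_le measurable_const measurable_fst).inter
        (measurableSet_le measurable_fst measurable_const))).inter
        ((MeasurableSet.iInter fun i => measurableSet_le measurable_const
          ((measurable_pi_apply i).comp measurable_snd)).inter
        (measurableSet_le (Finset.measurable_sum _ fun i _ =>
          (measurable_pi_apply i).comp measurable_snd)
          (measurable_const.sub measurable_fst)))
    have hpre : (MeasurableEquiv.piFinSuccAbove (fun _ : Fin (m+1) => ℝ) 0) ⁻¹' P
        = Tset (m+1) t := by
      ext x
      simp only [Set.mem_preimage, e_apply, hP, Set.mem_setOf_eq, Tset]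
      constructor
      · rintro ⟨⟨h0, -⟩, hy, hsum⟩
        refine ⟨fun i => ?_, ?_⟩
        · rcases Fin.eq_zero_or_eq_succ i with rfl | ⟨j, rfl⟩
          · exact h0
          · exact hy j
        · rw [Fin.sum_univ_succ]; linarith
      · rintro ⟨hx, hsum⟩
        rw [Fin.sum_univ_succ] at hsum
        exact ⟨⟨hx 0, by linarith [Finset.sum_nonneg fun j (_ : j ∈ Finset.univ) => hx (Fin.succ j)]⟩,
          fun i => hx _, by linarith⟩
    have key : volume (Tset (m+1) t) = (volume : Measure (ℝ × (Fin m → ℝ))) P := by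
      rw [← hpre]
      exact (volume_preserving_piFinSuccAbove (fun _ : Fin (m+1) => ℝ) 0).measure_preimage
        hPm.nullMeasurableSet
    rw [key, show (volume : Measure (ℝ × (Fin m → ℝ))) = (volume : Measure ℝ).prod volume from rfl,
      Measure.prod_apply hPm]
    have hfun : (fun a => volume (Prod.mk a ⁻¹' P)) =
        fun a => ENNReal.ofReal ((Set.Icc (0:ℝ) t).indicator
          (fun a => (t - a) ^ m / m.factorial) a) := by
      funext a
      by_cases h : 0 ≤ a ∧ a ≤ t
      · have hs : Prod.mk a ⁻¹' P = Tset m (t - a) := by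
          ext y; simp [hP, Tset, h.1, h.2]
        rw [hs, ih _ (by linarith [h.2]), Set.indicator_of_mem (Set.mem_Icc.2 h)]
      · have hs : Prod.mk a ⁻¹' P = ∅ := by
          ext y
          simp only [Set.mem_preimage, hP, Set.mem_setOf_eq, Set.mem_empty_iff_false, iff_false]
          rintro ⟨h1, -⟩; exact h h1
        rw [hs, Set.indicator_of_notMem (by simpa [Set.mem_Icc] using h)]
        simp
    rw [hfun, ← ofReal_integral_eq_lintegral_ofReal]
    · rw [MeasureTheory.integral_indicator measurableSet_Icc]
      congr 1
      rw [integral_Icc_eq_integral_Ioc, ← intervalIntegral.integral_of_le ht]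
      have h2 : (∫ x in (0:ℝ)..t, (t - x) ^ m / m.factorial)
          = ∫ x in (t-t)..(t-0), x ^ m / m.factorial := by
        rw [← intervalIntegral.integral_comp_sub_left (fun x => x ^ m / m.factorial) t]
      rw [h2]
      simp only [sub_self, sub_zero]
      rw [intervalIntegral.integral_div, integral_pow, Nat.factorial_succ]
      have h3 : (m.factorial:ℝ) ≠ 0 := Nat.cast_ne_zero.2 m.factorial_ne_zero
      have h4 : ((m:ℝ)+1) ≠ 0 := by positivity
      field_simp
      rw [zero_pow (by omega : m + 1 ≠ 0), sub_zero]; push_cast; ring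
    · apply (IntegrableOn.integrable_indicator ?_ measurableSet_Icc)
      apply ContinuousOn.integrableOn_compact isCompact_Icc
      fun_prop
    · exact Filter.Eventually.of_forall fun a => Set.indicator_nonneg
        (fun a' ha' => div_nonneg (pow_nonneg (by linarith [(Set.mem_Icc.1 ha').2]) m)
          (by positivity)) a

lemma sum_filter_ne_zero (m : ℕ) (x : Fin (m+1) → ℝ) :
    (∑ i ∈ Finset.univ.filter (fun i : Fin (m+1) => i ≠ 0), x i)
      = ∑ j : Fin m, x j.succ := by
  have h1 : x 0 + (∑ i ∈ Finset.univ.filter (fun i : Fin (m+1) => i ≠ 0), x i)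
      = ∑ i, x i := by
    rw [Finset.filter_ne']
    exact Finset.add_sum_erase _ x (Finset.mem_univ 0)
  rw [Fin.sum_univ_succ] at h1
  linarith

noncomputable def Bset (m : ℕ) (ξ : ℝ) : Set (Fin (m+1) → ℝ) :=
  {x | (∀ i, 0 ≤ x i) ∧
    (∑ i ∈ Finset.univ.filter (fun i : Fin (m+1) => i ≠ 0), x i) ≤ x 0 ∧ x 0 ≤ ξ}

lemma vol_Bset (m : ℕ) (ξ : ℝ) (hξ : 0 ≤ ξ) :
    volume (Bset m ξ) = ENNReal.ofReal (ξ ^ (m+1) / (m+1).factorial) := by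
  set P : Set (ℝ × (Fin m → ℝ)) :=
    {p | (0 ≤ p.1 ∧ p.1 ≤ ξ) ∧ ((∀ i, 0 ≤ p.2 i) ∧ ∑ i, p.2 i ≤ p.1)} with hP
  have hPm : MeasurableSet P := by
    have : P = ({p : ℝ × (Fin m → ℝ) | 0 ≤ p.1} ∩ {p | p.1 ≤ ξ}) ∩
        ((⋂ i, {p : ℝ × (Fin m → ℝ) | 0 ≤ p.2 i}) ∩ {p | ∑ i, p.2 i ≤ p.1}) := by
      ext p; simp [hP, and_assoc]
    rw [this]
    exact (((measurableSet_le measurable_const measurable_fst).inter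
      (measurableSet_le measurable_fst measurable_const))).inter
      ((MeasurableSet.iInter fun i => measurableSet_le measurable_const
        ((measurable_pi_apply i).comp measurable_snd)).inter
      (measurableSet_le (Finset.measurable_sum _ fun i _ =>
        (measurable_pi_apply i).comp measurable_snd) measurable_fst))
  have hpre : (MeasurableEquiv.piFinSuccAbove (fun _ : Fin (m+1) => ℝ) 0) ⁻¹' P
      = Bset m ξ := by
    ext x
    simp only [Set.mem_preimage, e_apply, hP, Set.mem_setOf_eq, Bset, sum_filter_ne_zero]
    constructor
    · rintro ⟨⟨h0, h0'⟩, hy, hsum⟩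
      refine ⟨fun i => ?_, hsum, h0'⟩
      rcases Fin.eq_zero_or_eq_succ i with rfl | ⟨j, rfl⟩
      · exact h0
      · exact hy j
    · rintro ⟨hx, hsum, hle⟩
      exact ⟨⟨hx 0, hle⟩, fun i => hx _, hsum⟩
  have key : volume (Bset m ξ) = (volume : Measure (ℝ × (Fin m → ℝ))) P := by
    rw [← hpre]
    exact (volume_preserving_piFinSuccAbove (fun _ : Fin (m+1) => ℝ) 0).measure_preimage
      hPm.nullMeasurableSet
  rw [key, show (volume : Measure (ℝ × (Fin m → ℝ))) = (volume : Measure ℝ).prod volume from rfl,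
    Measure.prod_apply hPm]
  have hfun : (fun a => volume (Prod.mk a ⁻¹' P)) =
      fun a => ENNReal.ofReal ((Set.Icc (0:ℝ) ξ).indicator
        (fun a => a ^ m / m.factorial) a) := by
    funext a
    by_cases h : 0 ≤ a ∧ a ≤ ξ
    · have hs : Prod.mk a ⁻¹' P = Tset m a := by
        ext y; simp [hP, Tset, h.1, h.2]
      rw [hs, vol_Tset m a h.1, Set.indicator_of_mem (Set.mem_Icc.2 h)]
    · have hs : Prod.mk a ⁻¹' P = ∅ := by
        ext y
        simp only [Set.mem_preimage, hP, Set.mem_setOf_eq, Set.mem_empty_iff_false, iff_false]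
        rintro ⟨h1, -⟩; exact h h1
      rw [hs, Set.indicator_of_notMem (by simpa [Set.mem_Icc] using h)]
      simp
  rw [hfun, ← ofReal_integral_eq_lintegral_ofReal]
  · rw [MeasureTheory.integral_indicator measurableSet_Icc]
    congr 1
    rw [integral_Icc_eq_integral_Ioc, ← intervalIntegral.integral_of_le hξ]
    rw [intervalIntegral.integral_div, integral_pow, Nat.factorial_succ]
    have h3 : (m.factorial:ℝ) ≠ 0 := Nat.cast_ne_zero.2 m.factorial_ne_zero
    have h4 : ((m:ℝ)+1) ≠ 0 := by positivity
    field_simp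
    rw [zero_pow (by omega : m + 1 ≠ 0), sub_zero]; push_cast; ring
  · apply (IntegrableOn.integrable_indicator ?_ measurableSet_Icc)
    apply ContinuousOn.integrableOn_compact isCompact_Icc
    fun_prop
  · exact Filter.Eventually.of_forall fun a => Set.indicator_nonneg
      (fun a' ha' => div_nonneg (pow_nonneg (Set.mem_Icc.1 ha').1 m) (by positivity)) a

/-- If a compact convex set `Δ ⊆ ℝ_{≥0}^n` has every slice `Δ_{x₁ = t}` contained in the
standard simplex of size `t`, and the portion `Δ_{x₁ ≤ ξ}` has volume `ξ^n/n!`, then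
`Δ_{x₁ ≤ ξ}` equals the inverted standard simplex of size `ξ`. -/
theorem stmt2 (n : ℕ) [NeZero n] (Δ : Set (Fin n → ℝ))
    (hc : IsCompact Δ) (hconv : Convex ℝ Δ)
    (hpos : ∀ x ∈ Δ, ∀ i, 0 ≤ x i)
    (hslice : ∀ x ∈ Δ, (∑ i ∈ Finset.univ.filter (fun i : Fin n => i ≠ 0), x i) ≤ x 0)
    (ξ : ℝ) (hξ : 0 < ξ)
    (hvol : volume (Δ ∩ {x | x 0 ≤ ξ}) = ENNReal.ofReal (ξ ^ n / n.factorial)) :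
    Δ ∩ {x | x 0 ≤ ξ} =
      {x : Fin n → ℝ | (∀ i, 0 ≤ x i) ∧
        (∑ i ∈ Finset.univ.filter (fun i : Fin n => i ≠ 0), x i) ≤ x 0 ∧ x 0 ≤ ξ} := by
  obtain ⟨m, rfl⟩ := Nat.exists_eq_succ_of_ne_zero (NeZero.ne n)
  set A : Set (Fin (m+1) → ℝ) := Δ ∩ {x | x 0 ≤ ξ} with hA
  have hBeq : {x : Fin (m+1) → ℝ | (∀ i, 0 ≤ x i) ∧
      (∑ i ∈ Finset.univ.filter (fun i : Fin (m+1) => i ≠ 0), x i) ≤ x 0 ∧ x 0 ≤ ξ}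
      = Bset m ξ := rfl
  rw [hBeq]
  set B := Bset m ξ with hB
  -- A ⊆ B
  have hsub : A ⊆ B := by
    rintro x ⟨hxΔ, hxξ⟩
    exact ⟨hpos x hxΔ, hslice x hxΔ, hxξ⟩
  -- A is closed
  have hAclosed : IsClosed A :=
    hc.isClosed.inter (isClosed_le (continuous_apply 0) continuous_const)
  -- B is convex
  have hBconv : Convex ℝ B := by
    rintro x ⟨hx1, hx2, hx3⟩ y ⟨hy1, hy2, hy3⟩ a b ha hb hab
    refine ⟨fun i => ?_, ?_, ?_⟩
    · have : (a • x + b • y) i = a * x i + b * y i := rfl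
      rw [this]
      exact add_nonneg (mul_nonneg ha (hx1 i)) (mul_nonneg hb (hy1 i))
    · have hsum : (∑ i ∈ Finset.univ.filter (fun i : Fin (m+1) => i ≠ 0), (a • x + b • y) i)
          = a * (∑ i ∈ Finset.univ.filter (fun i : Fin (m+1) => i ≠ 0), x i)
            + b * (∑ i ∈ Finset.univ.filter (fun i : Fin (m+1) => i ≠ 0), y i) := by
        rw [Finset.mul_sum, Finset.mul_sum, ← Finset.sum_add_distrib]
        rfl
      rw [hsum]
      have : (a • x + b • y) 0 = a * x 0 + b * y 0 := rfl
      rw [this]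
      exact add_le_add (mul_le_mul_of_nonneg_left hx2 ha) (mul_le_mul_of_nonneg_left hy2 hb)
    · have : (a • x + b • y) 0 = a * x 0 + b * y 0 := rfl
      rw [this]
      calc a * x 0 + b * y 0 ≤ a * ξ + b * ξ :=
            add_le_add (mul_le_mul_of_nonneg_left hx3 ha) (mul_le_mul_of_nonneg_left hy3 hb)
        _ = ξ := by rw [← add_mul, hab, one_mul]
  -- volume of B
  have hBvol : volume B = ENNReal.ofReal (ξ ^ (m+1) / (m+1).factorial) :=
    vol_Bset m ξ hξ.le
  have hvolpos : (0:ℝ) < ξ ^ (m+1) / (m+1).factorial := by positivity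
  -- interior of B is nonempty
  have hint : (interior B).Nonempty := by
    by_contra h
    rw [Set.not_nonempty_iff_eq_empty] at h
    have hBsub : B ⊆ frontier B := by
      intro x hx
      rw [frontier, h, Set.diff_empty]
      exact subset_closure hx
    have := measure_mono_null hBsub (hBconv.addHaar_frontier volume)
    rw [hBvol] at this
    simp only [ENNReal.ofReal_eq_zero] at this
    linarith
  obtain ⟨z, hz⟩ := hint
  -- show B ⊆ A
  apply Set.Subset.antisymm hsub
  intro y hy
  by_contra hyA
  -- find a ball around y disjoint from A
  obtain ⟨r, hr, hball⟩ := Metric.isOpen_iff.1 hAclosed.isOpen_compl y hyA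
  -- find a point of interior B within ball y r
  set a : ℝ := r / (2 * (dist z y + r)) with ha
  have hdzy : 0 ≤ dist z y := dist_nonneg
  have ha0 : 0 < a := by positivity
  have ha1 : a < 1 := by
    rw [ha, div_lt_one (by positivity)]
    linarith
  have hw : a • z + (1 - a) • y ∈ interior B :=
    hBconv.combo_interior_closure_mem_interior hz (subset_closure hy) ha0
      (by linarith) (by ring)
  have hwball : a • z + (1 - a) • y ∈ Metric.ball y r := by
    rw [Metric.mem_ball]
    have : a • z + (1 - a) • y - y = a • (z - y) := by
      module
    rw [dist_eq_norm, this, norm_smul, Real.norm_of_nonneg ha0.le, ← dist_eq_norm]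
    calc a * dist z y ≤ a * (dist z y + r) := by nlinarith
      _ = r / 2 := by rw [ha]; field_simp
      _ < r := by linarith
  -- the open set U
  set U := interior B ∩ Metric.ball y r with hU
  have hUopen : IsOpen U := isOpen_interior.inter Metric.isOpen_ball
  have hUne : U.Nonempty := ⟨_, hw, hwball⟩
  have hUpos : 0 < volume U := hUopen.measure_pos volume hUne
  have hUB : U ⊆ B := fun x hx => interior_subset hx.1
  have hUA : Disjoint A U := by
    rw [Set.disjoint_left]
    intro x hxA hxU
    exact hball hxU.2 hxA
  have hle : volume A + volume U ≤ volume B := by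
    rw [← measure_union hUA (hUopen.measurableSet)]
    exact measure_mono (Set.union_subset hsub hUB)
  rw [hvol, hBvol] at hle
  have : volume U = 0 := by
    have h1 : ENNReal.ofReal (ξ ^ (m+1) / (m+1).factorial) + volume U
        ≤ ENNReal.ofReal (ξ ^ (m+1) / (m+1).factorial) + 0 := by
      simpa using hle
    have := (ENNReal.add_le_add_iff_left (ENNReal.ofReal_ne_top)).1 h1
    exact le_antisymm this (zero_le)
  exact absurd this hUpos.ne'
end

section
/- Let Δ ⊆ ℝ_{≥0}^n be a compact convex set contained in the inverted cone {x ∈ ℝ_{≥0}^n : x_2+⋯+x_n ≤ x_1}. Suppose that for some ξ > 0 and every sufficiently small ε > 0, vol(Δ) - vol(Δ_{x_1 ≥ ξ-ε}) = (ξ-ε)^n/n!. Then the inverted standard simplex of size ξ, namely {x ∈ ℝ_{≥0}^n : x_2+⋯+x_n ≤ x_1 ≤ ξ}, is contained in Δ. -/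
open MeasureTheory

lemma cornerVol : ∀ (n : ℕ) (t : ℝ), 0 ≤ t →
    volume {y : Fin n → ℝ | (∀ i, 0 ≤ y i) ∧ ∑ i, y i ≤ t}
      = ENNReal.ofReal (t ^ n / n.factorial) := by
  intro n
  induction n with
  | zero =>
    intro t ht
    have : {y : Fin 0 → ℝ | (∀ i, 0 ≤ y i) ∧ ∑ i, y i ≤ t} = Set.univ := by
      ext y; simp [ht]
    rw [this]
    rw [volume_pi, Measure.pi_univ]
    simp
  | succ n ih =>
    intro t ht
    set A : Set (ℝ × (Fin n → ℝ)) :=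
      {p | 0 ≤ p.1 ∧ (∀ i, 0 ≤ p.2 i) ∧ p.1 + ∑ i, p.2 i ≤ t} with hA
    have hAm : MeasurableSet A := by
      have : A = {p : ℝ × (Fin n → ℝ) | 0 ≤ p.1} ∩ ((⋂ i, {p : ℝ × (Fin n → ℝ) | 0 ≤ p.2 i})
          ∩ {p : ℝ × (Fin n → ℝ) | p.1 + ∑ i, p.2 i ≤ t}) := by
        ext p; simp [hA, and_assoc]
      rw [this]
      have hcl : IsClosed ({p : ℝ × (Fin n → ℝ) | 0 ≤ p.1} ∩ ((⋂ i, {p : ℝ × (Fin n → ℝ) | 0 ≤ p.2 i})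
          ∩ {p : ℝ × (Fin n → ℝ) | p.1 + ∑ i, p.2 i ≤ t})) :=
        ((isClosed_le continuous_const continuous_fst).inter
        ((isClosed_iInter fun i => isClosed_le continuous_const
          ((continuous_apply i).comp continuous_snd)).inter
        (isClosed_le (continuous_fst.add (continuous_finset_sum _
          fun i _ => (continuous_apply i).comp continuous_snd)) continuous_const)))
      exact hcl.measurableSet
    have hpre : {y : Fin (n+1) → ℝ | (∀ i, 0 ≤ y i) ∧ ∑ i, y i ≤ t}
        = (MeasurableEquiv.piFinSuccAbove (fun _ => ℝ) 0) ⁻¹' A := by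
      ext y
      simp only [Set.mem_preimage, MeasurableEquiv.piFinSuccAbove_apply, hA, Set.mem_setOf_eq,
        Fin.insertNthEquiv_zero, Fin.consEquiv_symm_apply, Fin.tail]
      rw [Fin.sum_univ_succ (f := y)]
      constructor
      · rintro ⟨h1, h2⟩
        exact ⟨h1 0, fun i => h1 _, h2⟩
      · rintro ⟨h1, h2, h3⟩
        refine ⟨fun i => ?_, h3⟩
        rcases Fin.eq_zero_or_eq_succ i with rfl | ⟨j, rfl⟩
        · exact h1
        · exact h2 j
    rw [hpre, (volume_preserving_piFinSuccAbove (fun _ : Fin (n+1) => ℝ) 0).measure_preimage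
      hAm.nullMeasurableSet]
    have hslice : ∀ s : ℝ, volume (Prod.mk s ⁻¹' A)
        = Set.indicator (Set.Icc 0 t) (fun s => ENNReal.ofReal ((t - s) ^ n / n.factorial)) s := by
      intro s
      by_cases hs : s ∈ Set.Icc 0 t
      · rw [Set.indicator_of_mem hs]
        have he : Prod.mk s ⁻¹' A = {y : Fin n → ℝ | (∀ i, 0 ≤ y i) ∧ ∑ i, y i ≤ t - s} := by
          ext y
          simp only [Set.mem_preimage, hA, Set.mem_setOf_eq]
          constructor
          · rintro ⟨-, h2, h3⟩; exact ⟨h2, by linarith⟩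
          · rintro ⟨h2, h3⟩; exact ⟨hs.1, h2, by linarith⟩
        rw [he, ih _ (by linarith [hs.2])]
      · rw [Set.indicator_of_notMem hs]
        have he : Prod.mk s ⁻¹' A = ∅ := by
          ext y
          simp only [Set.mem_preimage, hA, Set.mem_setOf_eq, Set.mem_empty_iff_false, iff_false]
          rintro ⟨h1, h2, h3⟩
          have hsum : 0 ≤ ∑ i, y i := Finset.sum_nonneg fun i _ => h2 i
          exact hs ⟨h1, by linarith⟩
        rw [he, measure_empty]
    rw [Measure.volume_eq_prod, Measure.prod_apply hAm]
    simp only [hslice]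
    rw [lintegral_indicator measurableSet_Icc,
      setLIntegral_congr (Ioc_ae_eq_Icc (α := ℝ) (μ := volume) (a := 0) (b := t)).symm,
      ← MeasureTheory.ofReal_integral_eq_lintegral_ofReal
        (by fun_prop : Continuous fun s : ℝ => (t - s) ^ n / (n.factorial : ℝ)).integrableOn_Ioc
        ((ae_restrict_iff' (measurableSet_Ioc (a := (0:ℝ)) (b := t))).2 (Filter.Eventually.of_forall
          fun s hs => div_nonneg (pow_nonneg (by linarith [hs.2]) n) (Nat.cast_nonneg _)))]
    rw [← intervalIntegral.integral_of_le ht, intervalIntegral.integral_div]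
    have hcs : (∫ s in (0:ℝ)..t, (t - s) ^ n) = ∫ u in (0:ℝ)..t, u ^ n := by
      simpa using intervalIntegral.integral_comp_sub_left (a := 0) (b := t) (fun u => u ^ n) t
    rw [hcs, integral_pow]
    congr 1
    rw [Nat.factorial_succ]
    push_cast
    field_simp
    simp

lemma simplexVol (n : ℕ) [NeZero n] (t : ℝ) (ht : 0 ≤ t) :
    volume {x : Fin n → ℝ | (∀ i, 0 ≤ x i) ∧
      (∑ i ∈ Finset.univ.filter (fun i : Fin n => i ≠ 0), x i) ≤ x 0 ∧ x 0 ≤ t}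
      = ENNReal.ofReal (t ^ n / n.factorial) := by
  set L : (Fin n → ℝ) →ₗ[ℝ] (Fin n → ℝ) :=
    { toFun := fun y i => if i = 0 then ∑ j, y j else y i
      map_add' := by
        intro x y; funext i
        by_cases h : i = 0 <;> simp [h, Finset.sum_add_distrib]
      map_smul' := by
        intro c y; funext i
        by_cases h : i = 0 <;> simp [h, Finset.mul_sum] } with hL
  have hLy0 : ∀ y : Fin n → ℝ, L y 0 = ∑ j, y j := by intro y; simp [hL]
  have hLyi : ∀ (y : Fin n → ℝ) (i : Fin n), i ≠ 0 → L y i = y i := by intro y i h; simp [hL, h]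
  have hsumL : ∀ y : Fin n → ℝ,
      ∑ i ∈ Finset.univ.filter (fun i : Fin n => i ≠ 0), L y i
      = ∑ i ∈ Finset.univ.filter (fun i : Fin n => i ≠ 0), y i := fun y =>
    Finset.sum_congr rfl fun i hi => hLyi y i (Finset.mem_filter.1 hi).2
  have hsplit : ∀ y : Fin n → ℝ,
      ∑ j, y j = y 0 + ∑ i ∈ Finset.univ.filter (fun i : Fin n => i ≠ 0), y i := by
    intro y
    rw [Finset.filter_ne']
    exact (Finset.add_sum_erase _ _ (Finset.mem_univ 0)).symm
  have hdet : LinearMap.det L = 1 := by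
    rw [← LinearMap.det_toMatrix (Pi.basisFun ℝ (Fin n))]
    have hM : ∀ i j, LinearMap.toMatrix (Pi.basisFun ℝ (Fin n)) (Pi.basisFun ℝ (Fin n)) L i j
        = if i = 0 then 1 else if i = j then 1 else 0 := by
      intro i j
      rw [LinearMap.toMatrix_apply]
      simp only [Pi.basisFun_repr, Pi.basisFun_apply]
      by_cases h : i = 0
      · subst h
        rw [hLy0]
        simp [Finset.sum_pi_single']
      · rw [hLyi _ _ h, if_neg h]
        by_cases h2 : i = j <;> simp [h2, Pi.single_apply, eq_comm]
    have hut : ∀ i j, j < i →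
        LinearMap.toMatrix (Pi.basisFun ℝ (Fin n)) (Pi.basisFun ℝ (Fin n)) L i j = 0 := by
      intro i j hij
      have h0 : i ≠ 0 := by rintro rfl; simp [Fin.lt_def] at hij
      have hj : i ≠ j := fun h => absurd (h ▸ hij) (lt_irrefl _)
      rw [hM, if_neg h0, if_neg hj]
    rw [Matrix.det_of_upperTriangular hut]
    simp only [hM]; simp
  set S : Set (Fin n → ℝ) := {x : Fin n → ℝ | (∀ i, 0 ≤ x i) ∧
      (∑ i ∈ Finset.univ.filter (fun i : Fin n => i ≠ 0), x i) ≤ x 0 ∧ x 0 ≤ t} with hS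
  have hpre : L ⁻¹' S = {y : Fin n → ℝ | (∀ i, 0 ≤ y i) ∧ ∑ i, y i ≤ t} := by
    ext y
    simp only [Set.mem_preimage, hS, Set.mem_setOf_eq]
    rw [hLy0, hsumL]
    constructor
    · rintro ⟨h1, h2, h3⟩
      refine ⟨fun i => ?_, h3⟩
      by_cases h : i = 0
      · subst h
        have := hsplit y
        linarith
      · rw [← hLyi y i h]; exact h1 i
    · rintro ⟨h1, h2⟩
      refine ⟨fun i => ?_, ?_, h2⟩
      · by_cases h : i = 0
        · subst h; rw [hLy0]; exact Finset.sum_nonneg fun j _ => h1 j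
        · rw [hLyi y i h]; exact h1 i
      · have := hsplit y
        have := h1 0
        linarith
  have := Measure.addHaar_preimage_linearMap (volume : Measure (Fin n → ℝ))
    (by rw [hdet]; exact one_ne_zero) S
  rw [hpre, hdet] at this
  simp only [inv_one, abs_one, ENNReal.ofReal_one, one_mul] at this
  rw [← this, cornerVol n t ht]

/-- If a compact convex set `Δ` in the inverted cone satisfies
`vol Δ - vol (Δ_{x₁ ≥ ξ-ε}) = (ξ-ε)^n/n!` for all sufficiently small `ε > 0`, then the
inverted standard simplex of size `ξ` is contained in `Δ`. -/
theorem stmt3 (n : ℕ) [NeZero n] (Δ : Set (Fin n → ℝ))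
    (hc : IsCompact Δ) (hconv : Convex ℝ Δ)
    (hcone : Δ ⊆ {x : Fin n → ℝ | (∀ i, 0 ≤ x i) ∧
      (∑ i ∈ Finset.univ.filter (fun i : Fin n => i ≠ 0), x i) ≤ x 0})
    (ξ : ℝ) (hξ : 0 < ξ)
    (hvol : ∃ ε₀ > 0, ∀ ε : ℝ, 0 < ε → ε < ε₀ →
      volume Δ = volume (Δ ∩ {x | ξ - ε ≤ x 0}) + ENNReal.ofReal ((ξ - ε) ^ n / n.factorial)) :
    {x : Fin n → ℝ | (∀ i, 0 ≤ x i) ∧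
      (∑ i ∈ Finset.univ.filter (fun i : Fin n => i ≠ 0), x i) ≤ x 0 ∧ x 0 ≤ ξ} ⊆ Δ := by
  obtain ⟨ε₀, hε₀, hv⟩ := hvol
  have hΔm : MeasurableSet Δ := hc.isClosed.measurableSet
  have key : ∀ ε : ℝ, 0 < ε → ε < ε₀ → ε < ξ →
      {x : Fin n → ℝ | (∀ i, 0 ≤ x i) ∧
        (∑ i ∈ Finset.univ.filter (fun i : Fin n => i ≠ 0), x i) ≤ x 0 ∧ x 0 ≤ ξ - ε} ⊆ Δ := by
    intro ε hε hεε hεξ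
    set t : ℝ := ξ - ε with hts
    have htpos : 0 < t := by simp only [hts]; linarith
    set S : Set (Fin n → ℝ) := {x : Fin n → ℝ | (∀ i, 0 ≤ x i) ∧
        (∑ i ∈ Finset.univ.filter (fun i : Fin n => i ≠ 0), x i) ≤ x 0 ∧ x 0 ≤ t} with hS
    have hSvol : volume S = ENNReal.ofReal (t ^ n / n.factorial) := simplexVol n t htpos.le
    have hHalf : MeasurableSet {x : Fin n → ℝ | t ≤ x 0} :=
      (isClosed_le continuous_const (continuous_apply 0)).measurableSet
    have hsplit := measure_inter_add_diff (μ := volume) Δ hHalf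
    have hfin : volume (Δ ∩ {x : Fin n → ℝ | t ≤ x 0}) ≠ ⊤ :=
      ((measure_mono Set.inter_subset_left).trans_lt hc.measure_lt_top).ne
    have heq := hv ε hε hεε
    have hlow : volume (Δ \ {x : Fin n → ℝ | t ≤ x 0})
        = ENNReal.ofReal (t ^ n / n.factorial) := by
      rw [← hts] at heq
      exact (ENNReal.add_right_inj hfin).1 (hsplit.trans heq)
    have hsub : Δ \ {x : Fin n → ℝ | t ≤ x 0} ⊆ S := by
      rintro x ⟨hxΔ, hx⟩
      obtain ⟨h1, h2⟩ := hcone hxΔ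
      exact ⟨h1, h2, le_of_not_ge hx⟩
    have hnull : volume (S \ Δ) = 0 := by
      have h1 := measure_diff_add_inter (μ := volume) S hΔm
      have h2 : volume (Δ \ {x : Fin n → ℝ | t ≤ x 0}) ≤ volume (S ∩ Δ) :=
        measure_mono fun x hx => ⟨hsub hx, hx.1⟩
      rw [hlow] at h2
      have hb : volume (S ∩ Δ) ≠ ⊤ :=
        ((measure_mono Set.inter_subset_left).trans_lt (by rw [hSvol]; exact ENNReal.ofReal_lt_top)).ne
      have h3 : volume (S \ Δ) + volume (S ∩ Δ) ≤ 0 + volume (S ∩ Δ) := by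
        rw [h1, zero_add, hSvol]; exact h2
      exact le_zero_iff.1 ((ENNReal.add_le_add_iff_right hb).1 h3)
    have hSconv : Convex ℝ S := by
      rintro x ⟨hx1, hx2, hx3⟩ y ⟨hy1, hy2, hy3⟩ a b ha hb hab
      have happ : ∀ i, (a • x + b • y) i = a * x i + b * y i := fun i => rfl
      refine ⟨fun i => by rw [happ]; exact add_nonneg (mul_nonneg ha (hx1 i)) (mul_nonneg hb (hy1 i)),
        ?_, ?_⟩
      · simp only [happ]
        rw [Finset.sum_add_distrib, ← Finset.mul_sum, ← Finset.mul_sum]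
        exact add_le_add (mul_le_mul_of_nonneg_left hx2 ha) (mul_le_mul_of_nonneg_left hy2 hb)
      · rw [happ]
        calc a * x 0 + b * y 0 ≤ a * t + b * t :=
              add_le_add (mul_le_mul_of_nonneg_left hx3 ha) (mul_le_mul_of_nonneg_left hy3 hb)
          _ = t := by rw [← add_mul, hab, one_mul]
    intro p hp
    by_contra hpΔ
    have hSpos : 0 < volume S := by
      rw [hSvol]; exact ENNReal.ofReal_pos.2 (by positivity)
    have hint : (interior S).Nonempty := by
      by_contra hempty
      rw [Set.not_nonempty_iff_eq_empty] at hempty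
      have hfr : volume (frontier S) = 0 := hSconv.addHaar_frontier volume
      have : volume S = 0 := measure_mono_null
        (by rw [frontier, hempty, Set.diff_empty]; exact subset_closure) hfr
      exact hSpos.ne' this
    obtain ⟨q, hq⟩ := hint
    have hseq : ∀ k : ℕ, (1 - 1/((k:ℝ)+1)) • p + (1/((k:ℝ)+1)) • q ∈ interior S := by
      intro k
      have hk1 : (0:ℝ) < 1/((k:ℝ)+1) := by positivity
      have hk2 : 1/((k:ℝ)+1) ≤ 1 := by
        rw [div_le_one (by positivity)]; linarith [Nat.cast_nonneg (α := ℝ) k]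
      exact hSconv.combo_self_interior_mem_interior hp hq (by linarith) hk1 (by ring)
    have htend : Filter.Tendsto (fun k : ℕ => (1 - 1/((k:ℝ)+1)) • p + (1/((k:ℝ)+1)) • q)
        Filter.atTop (nhds p) := by
      have h0 : Filter.Tendsto (fun k : ℕ => 1/((k:ℝ)+1)) Filter.atTop (nhds 0) :=
        tendsto_one_div_add_atTop_nhds_zero_nat
      have hc1 : Filter.Tendsto (fun k : ℕ => (1 : ℝ) - 1/((k:ℝ)+1)) Filter.atTop (nhds 1) := by
        simpa using (tendsto_const_nhds (x := (1:ℝ)) (f := (Filter.atTop : Filter ℕ))).sub h0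
      have := (hc1.smul_const p).add (h0.smul_const q)
      simpa using this
    have hopen : Δᶜ ∈ nhds p := hc.isClosed.isOpen_compl.mem_nhds hpΔ
    obtain ⟨k, hk⟩ := (htend.eventually_mem hopen).exists
    have hop : IsOpen (interior S ∩ Δᶜ) := isOpen_interior.inter hc.isClosed.isOpen_compl
    have hne : (interior S ∩ Δᶜ).Nonempty := ⟨_, Set.mem_inter (hseq k) hk⟩
    have hz : volume (interior S ∩ Δᶜ) = 0 :=
      measure_mono_null (show interior S ∩ Δᶜ ⊆ S \ Δ from fun x hx => ⟨interior_subset hx.1, hx.2⟩) hnull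
    exact absurd hz (hop.measure_pos volume hne).ne'
  intro x hx
  obtain ⟨hx1, hx2, hx3⟩ := hx
  set δ : ℝ := min ε₀ ξ with hδdef
  have hδ : 0 < δ := lt_min hε₀ hξ
  have hmem : ∀ k : ℕ, ((ξ - δ/((k:ℝ)+2))/ξ) • x ∈ Δ := by
    intro k
    have hk2 : (2:ℝ) ≤ (k:ℝ) + 2 := by linarith [Nat.cast_nonneg (α := ℝ) k]
    have h1 : 0 < δ/((k:ℝ)+2) := by positivity
    have hlt : δ/((k:ℝ)+2) < δ := by
      rw [div_lt_iff₀ (by linarith)]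
      nlinarith
    have h2 : δ/((k:ℝ)+2) < ε₀ := hlt.trans_le (min_le_left _ _)
    have h3 : δ/((k:ℝ)+2) < ξ := hlt.trans_le (min_le_right _ _)
    apply key _ h1 h2 h3
    set c : ℝ := (ξ - δ/((k:ℝ)+2))/ξ with hcdef
    have hc0 : 0 ≤ c := div_nonneg (by linarith) hξ.le
    have happ : ∀ i, (c • x) i = c * x i := fun i => rfl
    refine ⟨fun i => by rw [happ]; exact mul_nonneg hc0 (hx1 i), ?_, ?_⟩
    · simp only [happ]
      rw [← Finset.mul_sum]
      exact mul_le_mul_of_nonneg_left hx2 hc0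
    · rw [happ]
      have : c * ξ = ξ - δ/((k:ℝ)+2) := by
        rw [hcdef, div_mul_eq_mul_div, mul_div_assoc, div_self hξ.ne', mul_one]
      calc c * x 0 ≤ c * ξ := mul_le_mul_of_nonneg_left hx3 hc0
        _ = ξ - δ/((k:ℝ)+2) := this
  have htend : Filter.Tendsto (fun k : ℕ => ((ξ - δ/((k:ℝ)+2))/ξ) • x)
      Filter.atTop (nhds x) := by
    have h0 : Filter.Tendsto (fun k : ℕ => δ/((k:ℝ)+2)) Filter.atTop (nhds 0) := by
      apply Filter.Tendsto.div_atTop (tendsto_const_nhds (x := δ))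
      exact Filter.tendsto_atTop_add_const_right _ 2 tendsto_natCast_atTop_atTop
    have h1 : Filter.Tendsto (fun k : ℕ => (ξ - δ/((k:ℝ)+2))/ξ) Filter.atTop (nhds 1) := by
      have := (tendsto_const_nhds (x := ξ)).sub h0 |>.div_const ξ
      rw [sub_zero, div_self hξ.ne'] at this
      exact this
    have := h1.smul_const x
    simpa using this
  exact hc.isClosed.mem_of_tendsto htend (Filter.Eventually.of_forall hmem)
end

section
/- Let Δ ⊆ ℝ_{≥0}^n be a compact convex set contained in {x ∈ ℝ_{≥0}^n : x_2+⋯+x_n ≤ x_1 ≤ μ} for some μ > 0. Define φ'(t) := vol(Δ_{x_1 ≥ t}). Then for all t ≥ 0, φ'(0) − φ'(t) ≤ t^n/n!. -/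
/-!
Every point of `Δ` either has `x₁ ≥ t` or lies in the inverted simplex
`{x ≥ 0 : x₂ + ⋯ + xₙ ≤ x₁ ≤ t}`, so `vol Δ ≤ vol Δ_{x₁ ≥ t}` plus the volume of that
simplex, while `Δ_{x₁ ≥ 0} = Δ`. Slicing the inverted simplex at `x₁ = a` gives the
corner simplex `{y ≥ 0 : ∑ yᵢ ≤ a}` of volume `aⁿ⁻¹/(n-1)!`, so by Fubini its volume
is `tⁿ/n!`.
-/

open MeasureTheory Set

theorem volume_eq_lintegral_volume_cons {n : ℕ} {S : Set (Fin (n + 1) → ℝ)}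
    (hS : MeasurableSet S) :
    volume S = ∫⁻ a, volume {y : Fin n → ℝ | Fin.cons a y ∈ S} := by
  let e := MeasurableEquiv.piFinSuccAbove (fun _ : Fin (n + 1) => ℝ) 0
  rw [← ((volume_preserving_piFinSuccAbove _ 0).symm e).measure_preimage hS.nullMeasurableSet,
    Measure.volume_eq_prod, Measure.prod_apply (e.symm.measurable hS)]
  have he : ⇑e.symm = fun p => Fin.cons p.1 p.2 := by
    ext; simp [e, MeasurableEquiv.piFinSuccAbove, Fin.insertNthEquiv]
  rw [he]
  rfl

def cornerSimplex (n : ℕ) (s : ℝ) : Set (Fin n → ℝ) :=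
  {y | (∀ i, 0 ≤ y i) ∧ ∑ i, y i ≤ s}

theorem measurableSet_cornerSimplex (n : ℕ) (s : ℝ) : MeasurableSet (cornerSimplex n s) := by
  unfold cornerSimplex; measurability

theorem cornerSimplex_eq_empty {n : ℕ} {s : ℝ} (hs : s < 0) : cornerSimplex n s = ∅ :=
  eq_empty_of_forall_notMem fun _ ⟨hy, hsum⟩ =>
    hs.not_ge <| (Finset.sum_nonneg fun i _ => hy i).trans hsum

theorem cons_mem_cornerSimplex {n : ℕ} {s a : ℝ} {y : Fin n → ℝ} :
    Fin.cons a y ∈ cornerSimplex (n + 1) s ↔ 0 ≤ a ∧ y ∈ cornerSimplex n (s - a) := by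
  simp only [cornerSimplex, mem_ofPred_eq, Fin.sum_cons, Fin.forall_fin_succ, Fin.cons_zero,
    Fin.cons_succ, le_sub_iff_add_le']
  tauto

theorem integral_pow_div_factorial (n : ℕ) (s : ℝ) :
    ∫ a in (0 : ℝ)..s, a ^ n / n.factorial = s ^ (n + 1) / (n + 1).factorial := by
  rw [intervalIntegral.integral_div, integral_pow, Nat.factorial_succ]
  push_cast
  field_simp
  ring

theorem lintegral_indicator_Icc_ofReal {f : ℝ → ℝ} {s : ℝ} (hs : 0 ≤ s)
    (hf : ContinuousOn f (Icc 0 s)) (hf₀ : ∀ a ∈ Icc 0 s, 0 ≤ f a) :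
    ∫⁻ a, (Icc 0 s).indicator (fun a => ENNReal.ofReal (f a)) a =
      ENNReal.ofReal (∫ a in (0 : ℝ)..s, f a) := by
  rw [lintegral_indicator measurableSet_Icc, ← ofReal_integral_eq_lintegral_ofReal
      (hf.integrableOn_compact isCompact_Icc) ((ae_restrict_iff' measurableSet_Icc).2
      (.of_forall hf₀)), integral_Icc_eq_integral_Ioc, intervalIntegral.integral_of_le hs]

theorem volume_cornerSimplex (n : ℕ) {s : ℝ} (hs : 0 ≤ s) :
    volume (cornerSimplex n s) = ENNReal.ofReal (s ^ n / n.factorial) := by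
  induction n generalizing s with
  | zero => simp [cornerSimplex, hs, volume_pi]
  | succ n ih =>
    have hslice : ∀ a, volume {y | Fin.cons a y ∈ cornerSimplex (n + 1) s} =
        (Icc 0 s).indicator (fun a => ENNReal.ofReal ((s - a) ^ n / n.factorial)) a := by
      intro a
      by_cases ha : a ∈ Icc 0 s
      · simp [cons_mem_cornerSimplex, ha, ha.1, ih (sub_nonneg.2 ha.2)]
      · rw [indicator_of_notMem ha]
        rcases not_and_or.1 ha with ha₀ | has
        · simp [cons_mem_cornerSimplex, ha₀]
        · simp [cons_mem_cornerSimplex, cornerSimplex_eq_empty (sub_neg.2 (not_le.1 has))]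
    have hint :
        ∫ a in (0 : ℝ)..s, (s - a) ^ n / n.factorial = s ^ (n + 1) / (n + 1).factorial := by
      have hsub := intervalIntegral.integral_comp_sub_left (fun a => a ^ n / n.factorial) s
        (a := 0) (b := s)
      simp only [sub_self, sub_zero] at hsub
      rw [hsub, integral_pow_div_factorial]
    rw [volume_eq_lintegral_volume_cons (measurableSet_cornerSimplex _ _), lintegral_congr hslice,
      lintegral_indicator_Icc_ofReal hs (by fun_prop) fun a ha => by
        have := sub_nonneg.2 ha.2; positivity, hint]

def invertedSimplex (n : ℕ) [NeZero n] (t : ℝ) : Set (Fin n → ℝ) :=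
  {x | (∀ i, 0 ≤ x i) ∧
    (∑ i ∈ Finset.univ.filter (fun i : Fin n => i ≠ 0), x i) ≤ x 0 ∧ x 0 ≤ t}

theorem measurableSet_invertedSimplex (n : ℕ) [NeZero n] (t : ℝ) :
    MeasurableSet (invertedSimplex n t) := by
  unfold invertedSimplex; measurability

theorem cons_mem_invertedSimplex {n : ℕ} {t a : ℝ} {y : Fin n → ℝ} :
    Fin.cons a y ∈ invertedSimplex (n + 1) t ↔ a ∈ Icc 0 t ∧ y ∈ cornerSimplex n a := by
  simp only [invertedSimplex, cornerSimplex, mem_ofPred_eq, Fin.forall_fin_succ, Fin.cons_zero,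
    Fin.cons_succ, Finset.sum_filter, Fin.sum_univ_succ, mem_Icc, ne_eq, not_true_eq_false,
    if_false, Fin.succ_ne_zero, not_false_eq_true, if_true, zero_add]
  tauto

theorem volume_invertedSimplex (n : ℕ) [NeZero n] {t : ℝ} (ht : 0 ≤ t) :
    volume (invertedSimplex n t) = ENNReal.ofReal (t ^ n / n.factorial) := by
  obtain ⟨m, rfl⟩ := Nat.exists_eq_succ_of_ne_zero (NeZero.ne n)
  have hslice : ∀ a, volume {y | Fin.cons a y ∈ invertedSimplex (m + 1) t} =
      (Icc 0 t).indicator (fun a => ENNReal.ofReal (a ^ m / m.factorial)) a := by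
    intro a
    by_cases ha : a ∈ Icc 0 t
    · simp [cons_mem_invertedSimplex, ha, volume_cornerSimplex m ha.1]
    · simp [cons_mem_invertedSimplex, ha]
  rw [volume_eq_lintegral_volume_cons (measurableSet_invertedSimplex _ _), lintegral_congr hslice,
    lintegral_indicator_Icc_ofReal ht (by fun_prop) fun a ha => by have := ha.1; positivity,
    integral_pow_div_factorial]

theorem measureReal_sub_le_of_subset_union {α : Type*} [MeasurableSpace α] {μ : Measure α}
    {s t u : Set α} (hts : t ⊆ s) (hs : s ⊆ t ∪ u) (hu : μ u ≠ ⊤) :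
    μ.real s - μ.real t ≤ μ.real u := by
  rw [sub_le_iff_le_add']
  exact ENNReal.toReal_le_add' ((measure_mono hs).trans (measure_union_le _ _))
    (fun h => top_unique (h ▸ measure_mono hts)) (fun h => absurd h hu)

theorem stmt9_general (n : ℕ) [NeZero n] (μ : ℝ) (Δ : Set (Fin n → ℝ))
    (hsub : Δ ⊆ {x : Fin n → ℝ | (∀ i, 0 ≤ x i) ∧
      (∑ i ∈ Finset.univ.filter (fun i : Fin n => i ≠ 0), x i) ≤ x 0 ∧ x 0 ≤ μ}) :
    ∀ t : ℝ, 0 ≤ t →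
      (volume (Δ ∩ {x | (0 : ℝ) ≤ x 0})).toReal - (volume (Δ ∩ {x | t ≤ x 0})).toReal
        ≤ t ^ n / n.factorial := by
  intro t ht
  have hΔ : Δ ∩ {x | 0 ≤ x 0} = Δ := inter_eq_left.2 fun x hx => (hsub hx).1 0
  have hcover : Δ ⊆ (Δ ∩ {x | t ≤ x 0}) ∪ invertedSimplex n t := fun x hx =>
    (le_or_gt t (x 0)).imp (fun h => ⟨hx, h⟩) fun h => ⟨(hsub hx).1, (hsub hx).2.1, h.le⟩
  have hvol := volume_invertedSimplex n ht
  rw [hΔ, ← ENNReal.toReal_ofReal (by positivity : 0 ≤ t ^ n / n.factorial), ← hvol]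
  exact measureReal_sub_le_of_subset_union inter_subset_left hcover (hvol ▸ ENNReal.ofReal_ne_top)

/-- For a compact convex set `Δ` contained in the inverted standard simplex of size `μ`,
the slice-volume differences satisfy `vol(Δ_{x₁ ≥ 0}) - vol(Δ_{x₁ ≥ t}) ≤ t^n/n!`. -/
theorem stmt9 (n : ℕ) [NeZero n] (μ : ℝ) (hμ : 0 < μ) (Δ : Set (Fin n → ℝ))
    (hc : IsCompact Δ) (hconv : Convex ℝ Δ)
    (hsub : Δ ⊆ {x : Fin n → ℝ | (∀ i, 0 ≤ x i) ∧
      (∑ i ∈ Finset.univ.filter (fun i : Fin n => i ≠ 0), x i) ≤ x 0 ∧ x 0 ≤ μ}) :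
    ∀ t : ℝ, 0 ≤ t →
      (volume (Δ ∩ {x | (0 : ℝ) ≤ x 0})).toReal - (volume (Δ ∩ {x | t ≤ x 0})).toReal
        ≤ t ^ n / n.factorial :=
  stmt9_general n μ Δ hsub
end

section
/- Let F be a real-indexed decreasing multiplicative filtration on a graded algebra of sections in the following abstract sense: F^a V_m · F^b V_{m'} ⊆ F^{a+b} V_{m+m'} (where · denotes the multiplication map of the graded linear series). Define V_•^{(t)} by V_m^{(t)} := F^{tm} V_m. If there exist m' > 0 with V_{m'} 'birational' and, for some ε > 0, V_m^{(t+ε)} ≠ 0 for all m ≫ 0, then for all m ≫ 0, V_m^{(t)} contains s · V_{m'} for some nonzero section s; in particular dim V_{m+m'}^{(t)} ≥ dim V_{m'}. -/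
/-- Abstract form of Lemma 2.1: for a multiplicative real-indexed decreasing filtration `F`
on a graded system of finite-dimensional subspaces `V_m` of a domain, if `F^{(t+ε)m}V_m ≠ 0`
for all `m ≫ 0`, then for all `m ≫ 0` there is a nonzero `s ∈ F^{(t+ε)m}V_m` with
`s · V_{m'} ⊆ F^{t(m+m')}V_{m+m'}`; in particular `dim V^{(t)}_{m+m'} ≥ dim V_{m'}`. -/
theorem stmt18 (K A : Type*) [Field K] [CommRing A] [IsDomain A] [Algebra K A]
    (V : ℕ → Submodule K A)
    (hfd : ∀ m, FiniteDimensional K ↥(V m))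
    (hmul : ∀ m m' : ℕ, ∀ x ∈ V m, ∀ y ∈ V m', x * y ∈ V (m + m'))
    (F : ℝ → ℕ → Submodule K A)
    (hF0 : ∀ m, F 0 m = V m)
    (hFanti : ∀ m, AntitoneOn (fun a => F a m) (Set.Ici 0))
    (hFmul : ∀ a b : ℝ, 0 ≤ a → 0 ≤ b → ∀ m m' : ℕ, ∀ x ∈ F a m, ∀ y ∈ F b m',
      x * y ∈ F (a + b) (m + m'))
    (t ε : ℝ) (ht : 0 ≤ t) (hε : 0 < ε)
    (m' : ℕ) (hm' : 0 < m') (hbir : V m' ≠ ⊥)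
    (hne : ∃ M : ℕ, ∀ m ≥ M, F ((t + ε) * (m : ℝ)) m ≠ ⊥) :
    ∃ M : ℕ, ∀ m ≥ M, ∃ s ∈ F ((t + ε) * (m : ℝ)) m, s ≠ 0 ∧
      (∀ y ∈ V m', s * y ∈ F (t * ((m : ℝ) + (m' : ℝ))) (m + m')) ∧
      Module.finrank K ↥(V m')
        ≤ Module.finrank K ↥(F (t * ((m : ℝ) + (m' : ℝ))) (m + m')) := by
  obtain ⟨M₀, hM₀⟩ := hne
  refine ⟨max M₀ ⌈t * (m' : ℝ) / ε⌉₊, fun m hm => ?_⟩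
  have hmM₀ : m ≥ M₀ := le_trans (le_max_left _ _) hm
  have hmt : t * (m' : ℝ) / ε ≤ (m : ℝ) := by
    calc t * (m' : ℝ) / ε ≤ (⌈t * (m' : ℝ) / ε⌉₊ : ℝ) := Nat.le_ceil _
    _ ≤ (m : ℝ) := by exact_mod_cast le_trans (le_max_right _ _) hm
  have hkey : t * ((m : ℝ) + (m' : ℝ)) ≤ (t + ε) * (m : ℝ) := by
    have := (div_le_iff₀ hε).mp hmt
    nlinarith
  obtain ⟨s, hs, hs0⟩ := Submodule.exists_mem_ne_zero_of_ne_bot (hM₀ m hmM₀)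
  have htm : 0 ≤ t * ((m : ℝ) + (m' : ℝ)) := by positivity
  have hsub : ∀ y ∈ V m', s * y ∈ F (t * ((m : ℝ) + (m' : ℝ))) (m + m') := by
    intro y hy
    have hy' : y ∈ F 0 m' := by rw [hF0]; exact hy
    have := hFmul ((t + ε) * (m : ℝ)) 0 (le_trans htm hkey) le_rfl m m' s hs y hy'
    rw [add_zero] at this
    exact hFanti (m + m') htm (le_trans htm hkey) hkey this
  refine ⟨s, hs, hs0, hsub, ?_⟩
  have hfin : FiniteDimensional K ↥(F (t * ((m : ℝ) + (m' : ℝ))) (m + m')) := by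
    have hle : F (t * ((m : ℝ) + (m' : ℝ))) (m + m') ≤ V (m + m') := by
      rw [← hF0]; exact hFanti (m + m') (Set.mem_Ici.mpr le_rfl) htm htm
    exact Submodule.finiteDimensional_of_le hle
  let f : ↥(V m') →ₗ[K] ↥(F (t * ((m : ℝ) + (m' : ℝ))) (m + m')) :=
    { toFun := fun y => ⟨s * y, hsub y y.2⟩
      map_add' := fun a b => by ext; simp [mul_add]
      map_smul' := fun c a => by ext; simp [mul_smul_comm] }
  have hinj : Function.Injective f := by
    intro a b hab
    have : s * (a : A) = s * (b : A) := congrArg Subtype.val hab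
    have := mul_left_cancel₀ hs0 this
    exact Subtype.ext this
  exact LinearMap.finrank_le_finrank_of_injective hinj
end
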